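/- There exists a constant C = C(α) such that for all k₁, k₂, k₃ ∈ ℤ, all j₁, j₂, j₃ ∈ ℤ_{≥0}, and all functions f₁, f₂ ∈ L²(ℝ²) with f_i supported in V_{k_i}^{j_i} (i = 1,2), one has ‖1_{V_{k₃}^{j₃}} · (f₁ * f₂)‖_{L²} ≤ C · min(|U_{k₁}|, |U_{k₂}|, |U_{k₃}|)^{1/2} · 2^{min(j₁,j₂,j₃)/2} · ‖f₁‖_{L²} ‖f₂‖_{L²}. -/

import Mathlib

/-!
Cauchy–Schwarz in the convolution integral, used in two ways. Restricting to the `p` with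
`p ∈ V₁` and `q - p ∈ V₂` gives `|f₁ * f₂ (q)|² ≤ |V₁ ∩ (q - V₂)| ∫ |f₁(p)|² |f₂(q - p)|²`, and
integrating in `q` bounds `‖f₁ * f₂‖²` by `sup_q |V₁ ∩ (q - V₂)| ‖f₁‖² ‖f₂‖²`. Putting all of `f₁`
on one side instead gives `|f₁ * f₂ (q)|² ≤ ‖f₁‖² ∫ 1_{V₁}(p) |f₂(q - p)|²`; integrating over
`q ∈ V₃` and substituting `q = y + p` bounds `‖1_{V₃} (f₁ * f₂)‖²` by
`sup_y |V₁ ∩ (V₃ - y)| ‖f₁‖² ‖f₂‖²`, and commutativity of convolution gives the same with `f₁` and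
`f₂` exchanged.

Each `V_k^j` is the `J_j`-thickening of the graph of `ω` over `U_k`, and its translates and
reflections are thickenings of other graphs by translates and reflections of `U_k` and `J_j`. Two
such thickenings meet in a set whose vertical fibres have length at most `min(|J_a|, |J_b|)` over
a base of measure at most `min(|U_a|, |U_b|)`. Any two of the three indices lie in a common pair,
so the three pair bounds combine to `min |U_k| · min |J_j|`, and `|J_j| ≤ 2^(j+2)`.
-/

open MeasureTheory Set
open scoped ENNReal

noncomputable section

/-- The sequence `n₀ = 0`, `n₁ = 4`, `n_{k+1} = n_k + n_k^{1/2}` for `k ≥ 1`. -/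
def nseq : ℕ → ℝ
  | 0 => 0
  | 1 => 4
  | k + 2 => nseq (k + 1) + Real.sqrt (nseq (k + 1))

/-- Extension of `nseq` to `ℤ` by `n_{-k} = -n_k`. -/
def nZ : ℤ → ℝ := fun k => if 0 ≤ k then nseq k.toNat else -nseq (-k).toNat

/-- The dispersion relation `ω(ξ) = -ξ|ξ|^α`. -/
def omega (α ξ : ℝ) : ℝ := -ξ * |ξ| ^ α

/-- The resonance function `Ω(ξ₁,ξ₂) = -ω(ξ₁+ξ₂) + ω(ξ₁) + ω(ξ₂)`. -/
def Omega (α ξ₁ ξ₂ : ℝ) : ℝ := -omega α (ξ₁ + ξ₂) + omega α ξ₁ + omega α ξ₂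

/-- The frequency sets `U_k`. -/
def Uset (k : ℤ) : Set ℝ :=
  if 1 ≤ k then
    {ν : ℝ | |ν| ∈ Set.Icc ((5 * nZ (k - 1) + nZ k) / 6) ((5 * nZ (k + 1) + nZ k) / 6)}
  else {ν : ℝ | |ν| ∈ Set.Icc ((2 : ℝ) ^ (k + 1)) ((2 : ℝ) ^ (k + 3))}

/-- The modulation sets `J_j`: `J₀ = [-2,2]` and `J_j = {|ν| ∈ [2^{j-1}, 2^{j+1}]}`. -/
def Jset : ℕ → Set ℝ
  | 0 => Set.Icc (-2) 2
  | j + 1 => {ν : ℝ | |ν| ∈ Set.Icc ((2 : ℝ) ^ j) ((2 : ℝ) ^ (j + 2))}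

/-- The trilinear form
`J(f,g,h) = ∫ f(ξ₁,μ₁) g(ξ₂,μ₂) h(ξ₁+ξ₂, μ₁+μ₂+Ω(ξ₁,ξ₂))`. -/
def Jnt (α : ℝ) (f g h : ℝ × ℝ → ℂ) : ℂ :=
  ∫ p : (ℝ × ℝ) × (ℝ × ℝ),
    f p.1 * g p.2 * h (p.1.1 + p.2.1, p.1.2 + p.2.2 + Omega α p.1.1 p.2.1)

/-- The `L²(ℝ²)` norm, as a real number. -/
def L2N (f : ℝ × ℝ → ℂ) : ℝ := (eLpNorm f 2 volume).toReal

/-- `d_α(k₁,k₂;k₃) = inf { ||ξ₁|^α - |ξ₂|^α| : ξ₁ ∈ U_{k₁}, ξ₂ ∈ U_{k₂}, ξ₁+ξ₂ ∈ U_{k₃} }`. -/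
def dalpha (α : ℝ) (k₁ k₂ k₃ : ℤ) : ℝ :=
  sInf ((fun p : ℝ × ℝ => |(|p.1| ^ α) - (|p.2| ^ α)|) ''
    {p : ℝ × ℝ | p.1 ∈ Uset k₁ ∧ p.2 ∈ Uset k₂ ∧ p.1 + p.2 ∈ Uset k₃})

/-- Convolution on `ℝ²`. -/
def conv2 (f g : ℝ × ℝ → ℂ) : ℝ × ℝ → ℂ :=
  fun q => ∫ p : ℝ × ℝ, f p * g (q.1 - p.1, q.2 - p.2)

/-- The sets `V_k^j = {(ξ,τ) : ξ ∈ U_k, τ - ω(ξ) ∈ J_j}`. -/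
def Vset (α : ℝ) (k : ℤ) (j : ℕ) : Set (ℝ × ℝ) :=
  {q : ℝ × ℝ | q.1 ∈ Uset k ∧ q.2 - omega α q.1 ∈ Jset j}

/-- The median of three natural numbers. -/
def med3 (a b c : ℕ) : ℕ := a + b + c - max (max a b) c - min (min a b) c

open scoped Convolution

theorem lintegral_mul_sq_le {X : Type*} [MeasurableSpace X] {μ : Measure X} {f g : X → ℝ≥0∞}
    (hf : AEMeasurable f μ) (hg : AEMeasurable g μ) :
    (∫⁻ x, f x * g x ∂μ) ^ 2 ≤ (∫⁻ x, f x ^ 2 ∂μ) * ∫⁻ x, g x ^ 2 ∂μ := by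
  have h := ENNReal.lintegral_mul_le_Lp_mul_Lq μ Real.HolderConjugate.two_two hf hg
  simp only [ENNReal.rpow_two, Pi.mul_apply] at h
  calc (∫⁻ x, f x * g x ∂μ) ^ 2
      ≤ ((∫⁻ x, f x ^ 2 ∂μ) ^ (1 / 2 : ℝ) * (∫⁻ x, g x ^ 2 ∂μ) ^ (1 / 2 : ℝ)) ^ 2 :=
        pow_le_pow_left' h 2
    _ = (∫⁻ x, f x ^ 2 ∂μ) * ∫⁻ x, g x ^ 2 ∂μ := by
        rw [mul_pow, ← ENNReal.rpow_natCast, ← ENNReal.rpow_natCast (_ ^ _), ← ENNReal.rpow_mul,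
          ← ENNReal.rpow_mul]
        norm_num

theorem lintegral_indicator_one_sq {X : Type*} [MeasurableSpace X] {μ : Measure X} {S : Set X}
    (hS : MeasurableSet S) : ∫⁻ x, S.indicator 1 x ^ 2 ∂μ = μ S := by
  rw [← lintegral_indicator_one hS]
  congr with x
  by_cases hx : x ∈ S <;> simp [hx]

theorem eLpNorm_two_sq {X E : Type*} [MeasurableSpace X] {μ : Measure X} [NormedAddCommGroup E]
    (f : X → E) : eLpNorm f 2 μ ^ 2 = ∫⁻ x, ‖f x‖ₑ ^ 2 ∂μ := by
  simpa using eLpNorm_nnreal_pow_eq_lintegral (f := f) (μ := μ) (p := 2) two_ne_zero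

theorem le_min_mul_min_mul_of_pairs {a b c A B C K L : ℝ≥0∞}
    (h12 : L ≤ min a b * min A B * K) (h13 : L ≤ min a c * min A C * K)
    (h23 : L ≤ min b c * min B C * K) :
    L ≤ min (min a b) c * min (min A B) C * K := by
  have min3 (x y z : ℝ≥0∞) :
      min (min x y) z = x ∨ min (min x y) z = y ∨ min (min x y) z = z := by
    rcases min_choice (min x y) z with h | h
    · rcases min_choice x y with h' | h' <;> rw [h, h'] <;> simp
    · simp [h]
  rcases min3 a b c with h | h | h <;> rw [h] <;>
  rcases min3 A B C with h' | h' | h' <;> rw [h'] <;>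
  first
  | (refine h12.trans ?_; gcongr <;> simp <;> done)
  | (refine h13.trans ?_; gcongr <;> simp <;> done)
  | (refine h23.trans ?_; gcongr <;> simp)

theorem le_two_mul_rpow_half {S u e : ℝ} {m : ℕ} (hu : 0 ≤ u) (he : 0 ≤ e)
    (h : S ^ 2 ≤ u * 2 ^ (m + 2) * e ^ 2) :
    S ≤ 2 * u ^ (1 / 2 : ℝ) * 2 ^ ((m : ℝ) / 2) * e := by
  have hsq : (2 * u ^ (1 / 2 : ℝ) * 2 ^ ((m : ℝ) / 2) * e) ^ 2 = u * 2 ^ (m + 2) * e ^ 2 := by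
    rw [mul_pow, mul_pow, mul_pow, ← Real.rpow_natCast (u ^ _), ← Real.rpow_mul hu,
      ← Real.rpow_natCast ((2 : ℝ) ^ _), ← Real.rpow_mul zero_le_two, Nat.cast_ofNat,
      one_div_mul_cancel two_ne_zero, div_mul_cancel₀ _ two_ne_zero, Real.rpow_one,
      Real.rpow_natCast]
    ring
  exact le_of_sq_le_sq (hsq ▸ h) (by positivity)

section Convolution

variable {G : Type*} [MeasurableSpace G] [AddCommGroup G] {μ : Measure G}

theorem enorm_convolution_mul_le {𝕜 : Type*} [NontriviallyNormedField 𝕜] [NormedSpace ℝ 𝕜]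
    (f g : G → 𝕜) (x : G) :
    ‖(f ⋆[ContinuousLinearMap.mul 𝕜 𝕜, μ] g) x‖ₑ ≤ ∫⁻ t, ‖f t‖ₑ * ‖g (x - t)‖ₑ ∂μ := by
  rw [convolution_mul]
  exact (enorm_integral_le_lintegral_enorm _).trans_eq (by simp_rw [enorm_mul])

variable [MeasurableAdd₂ G] [MeasurableNeg G] [SFinite μ] [μ.IsAddRightInvariant]

theorem MeasureTheory.AEStronglyMeasurable.aemeasurable_enorm_comp_sub_left {E : Type*}
    [TopologicalSpace E] [ContinuousENorm E] {g : G → E} (hg : AEStronglyMeasurable g μ) (x : G) :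
    AEMeasurable (fun t => ‖g (x - t)‖ₑ) μ :=
  hg.enorm.comp_quasiMeasurePreserving (quasiMeasurePreserving_sub_left_of_right_invariant μ x)

theorem MeasureTheory.AEStronglyMeasurable.aemeasurable_enorm_comp_sub {E : Type*}
    [TopologicalSpace E] [ContinuousENorm E] {g : G → E} (hg : AEStronglyMeasurable g μ) :
    AEMeasurable (fun p : G × G => ‖g (p.1 - p.2)‖ₑ) (μ.prod μ) :=
  hg.enorm.comp_quasiMeasurePreserving (quasiMeasurePreserving_sub_of_right_invariant μ μ)

variable {𝕜 : Type*} [NontriviallyNormedField 𝕜] [NormedSpace ℝ 𝕜] {f g : G → 𝕜} {M : ℝ≥0∞}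

theorem lintegral_enorm_convolution_sq_le {A B : Set G}
    (hf : AEStronglyMeasurable f μ) (hg : AEStronglyMeasurable g μ)
    (hA : MeasurableSet A) (hB : MeasurableSet B)
    (hfA : Function.support f ⊆ A) (hgB : Function.support g ⊆ B)
    (hM : ∀ x, μ (A ∩ {t | x - t ∈ B}) ≤ M) :
    ∫⁻ x, ‖(f ⋆[ContinuousLinearMap.mul 𝕜 𝕜, μ] g) x‖ₑ ^ 2 ∂μ ≤
      M * ((∫⁻ t, ‖f t‖ₑ ^ 2 ∂μ) * ∫⁻ t, ‖g t‖ₑ ^ 2 ∂μ) := by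
  have pointwise (x : G) : ‖(f ⋆[ContinuousLinearMap.mul 𝕜 𝕜, μ] g) x‖ₑ ^ 2 ≤
      M * ∫⁻ t, ‖f t‖ₑ ^ 2 * ‖g (x - t)‖ₑ ^ 2 ∂μ := by
    set S := A ∩ {t | x - t ∈ B}
    have hS : MeasurableSet S := hA.inter (hB.preimage (measurable_const_sub x))
    have hsupp (t : G) : ‖f t‖ₑ * ‖g (x - t)‖ₑ = S.indicator 1 t * (‖f t‖ₑ * ‖g (x - t)‖ₑ) := by
      by_cases ht : t ∈ S
      · simp [ht]
      · have : f t = 0 ∨ g (x - t) = 0 := by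
          by_contra! h
          exact ht ⟨hfA h.1, hgB h.2⟩
        rcases this with h | h <;> simp [h]
    calc ‖(f ⋆[ContinuousLinearMap.mul 𝕜 𝕜, μ] g) x‖ₑ ^ 2
        ≤ (∫⁻ t, S.indicator 1 t * (‖f t‖ₑ * ‖g (x - t)‖ₑ) ∂μ) ^ 2 := by
          gcongr
          exact (enorm_convolution_mul_le f g x).trans_eq (lintegral_congr hsupp)
      _ ≤ (∫⁻ t, S.indicator 1 t ^ 2 ∂μ) * ∫⁻ t, (‖f t‖ₑ * ‖g (x - t)‖ₑ) ^ 2 ∂μ :=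
          lintegral_mul_sq_le (aemeasurable_one.indicator hS)
            (hf.enorm.mul (hg.aemeasurable_enorm_comp_sub_left x))
      _ ≤ M * ∫⁻ t, ‖f t‖ₑ ^ 2 * ‖g (x - t)‖ₑ ^ 2 ∂μ := by
          simp_rw [lintegral_indicator_one_sq hS, mul_pow]
          gcongr
          exact hM x
  have hF : AEMeasurable (fun p : G × G => ‖f p.2‖ₑ ^ 2 * ‖g (p.1 - p.2)‖ₑ ^ 2) (μ.prod μ) :=
    (hf.enorm.comp_snd.pow_const 2).mul (hg.aemeasurable_enorm_comp_sub.pow_const 2)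
  calc ∫⁻ x, ‖(f ⋆[ContinuousLinearMap.mul 𝕜 𝕜, μ] g) x‖ₑ ^ 2 ∂μ
      ≤ ∫⁻ x, M * ∫⁻ t, ‖f t‖ₑ ^ 2 * ‖g (x - t)‖ₑ ^ 2 ∂μ ∂μ := lintegral_mono pointwise
    _ = M * ∫⁻ t, ∫⁻ x, ‖f t‖ₑ ^ 2 * ‖g (x - t)‖ₑ ^ 2 ∂μ ∂μ := by
        rw [lintegral_const_mul'' _ hF.lintegral_prod_right', lintegral_lintegral_swap hF]
    _ = M * ∫⁻ t, ‖f t‖ₑ ^ 2 * ∫⁻ y, ‖g y‖ₑ ^ 2 ∂μ ∂μ := by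
        congr 1
        refine lintegral_congr fun t => ?_
        rw [lintegral_const_mul' _ _ (by simp), lintegral_sub_right_eq_self (‖g ·‖ₑ ^ 2) t]
    _ = M * ((∫⁻ t, ‖f t‖ₑ ^ 2 ∂μ) * ∫⁻ t, ‖g t‖ₑ ^ 2 ∂μ) := by
        rw [lintegral_mul_const'' _ (hf.enorm.pow_const 2)]

theorem setLIntegral_enorm_convolution_sq_le {A E : Set G}
    (hf : AEStronglyMeasurable f μ) (hg : AEStronglyMeasurable g μ)
    (hA : MeasurableSet A) (hE : MeasurableSet E) (hfA : Function.support f ⊆ A)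
    (hM : ∀ y, μ (A ∩ {t | y + t ∈ E}) ≤ M) :
    ∫⁻ x in E, ‖(f ⋆[ContinuousLinearMap.mul 𝕜 𝕜, μ] g) x‖ₑ ^ 2 ∂μ ≤
      M * ((∫⁻ t, ‖f t‖ₑ ^ 2 ∂μ) * ∫⁻ t, ‖g t‖ₑ ^ 2 ∂μ) := by
  have pointwise (x : G) : ‖(f ⋆[ContinuousLinearMap.mul 𝕜 𝕜, μ] g) x‖ₑ ^ 2 ≤
      (∫⁻ t, ‖f t‖ₑ ^ 2 ∂μ) * ∫⁻ t, A.indicator 1 t * ‖g (x - t)‖ₑ ^ 2 ∂μ := by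
    have hsupp (t : G) :
        ‖f t‖ₑ * ‖g (x - t)‖ₑ = ‖f t‖ₑ * (A.indicator 1 t * ‖g (x - t)‖ₑ) := by
      by_cases ht : t ∈ A
      · simp [ht]
      · simp [Function.notMem_support.mp (mt (@hfA t) ht)]
    calc ‖(f ⋆[ContinuousLinearMap.mul 𝕜 𝕜, μ] g) x‖ₑ ^ 2
        ≤ (∫⁻ t, ‖f t‖ₑ * (A.indicator 1 t * ‖g (x - t)‖ₑ) ∂μ) ^ 2 := by
          gcongr
          exact (enorm_convolution_mul_le f g x).trans_eq (lintegral_congr hsupp)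
      _ ≤ (∫⁻ t, ‖f t‖ₑ ^ 2 ∂μ) * ∫⁻ t, (A.indicator 1 t * ‖g (x - t)‖ₑ) ^ 2 ∂μ :=
          lintegral_mul_sq_le hf.enorm
            ((aemeasurable_one.indicator hA).mul (hg.aemeasurable_enorm_comp_sub_left x))
      _ = (∫⁻ t, ‖f t‖ₑ ^ 2 ∂μ) * ∫⁻ t, A.indicator 1 t * ‖g (x - t)‖ₑ ^ 2 ∂μ := by
          congr 1
          refine lintegral_congr fun t => ?_
          by_cases ht : t ∈ A <;> simp [ht]
  have h1E : Measurable (E.indicator (1 : G → ℝ≥0∞)) := measurable_one.indicator hE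
  have h1A : Measurable (A.indicator (1 : G → ℝ≥0∞)) := measurable_one.indicator hA
  have hK : AEMeasurable (Function.uncurry fun x t =>
      E.indicator 1 x * (A.indicator 1 t * ‖g (x - t)‖ₑ ^ 2)) (μ.prod μ) :=
    (h1E.comp measurable_fst).aemeasurable.mul
      ((h1A.comp measurable_snd).aemeasurable.mul (hg.aemeasurable_enorm_comp_sub.pow_const 2))
  have hK' : AEMeasurable (Function.uncurry fun y t =>
      E.indicator 1 (y + t) * (A.indicator 1 t * ‖g y‖ₑ ^ 2)) (μ.prod μ) :=
    (h1E.comp measurable_add).aemeasurable.mul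
      ((h1A.comp measurable_snd).aemeasurable.mul (hg.enorm.pow_const 2).comp_fst)
  calc ∫⁻ x in E, ‖(f ⋆[ContinuousLinearMap.mul 𝕜 𝕜, μ] g) x‖ₑ ^ 2 ∂μ
      ≤ ∫⁻ x, (∫⁻ t, ‖f t‖ₑ ^ 2 ∂μ) *
          ∫⁻ t, E.indicator 1 x * (A.indicator 1 t * ‖g (x - t)‖ₑ ^ 2) ∂μ ∂μ := by
        rw [← lintegral_indicator hE]
        refine lintegral_mono fun x => ?_
        by_cases hx : x ∈ E <;> simp [hx, pointwise x]
    _ = (∫⁻ t, ‖f t‖ₑ ^ 2 ∂μ) *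
        ∫⁻ x, ∫⁻ t, E.indicator 1 x * (A.indicator 1 t * ‖g (x - t)‖ₑ ^ 2) ∂μ ∂μ :=
        lintegral_const_mul'' _ hK.lintegral_prod_right'
    _ = (∫⁻ t, ‖f t‖ₑ ^ 2 ∂μ) *
        ∫⁻ y, ∫⁻ t, E.indicator 1 (y + t) * (A.indicator 1 t * ‖g y‖ₑ ^ 2) ∂μ ∂μ := by
        rw [lintegral_lintegral_swap hK, lintegral_lintegral_swap hK']
        congr 1
        refine lintegral_congr fun t => ?_
        simpa using (lintegral_add_right_eq_self
          (fun x => E.indicator 1 x * (A.indicator 1 t * ‖g (x - t)‖ₑ ^ 2)) t).symm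
    _ = (∫⁻ t, ‖f t‖ₑ ^ 2 ∂μ) * ∫⁻ y, ‖g y‖ₑ ^ 2 * μ (A ∩ {t | y + t ∈ E}) ∂μ := by
        congr 1
        refine lintegral_congr fun y => ?_
        have hS : MeasurableSet (A ∩ {t | y + t ∈ E}) :=
          hA.inter (hE.preimage (measurable_const_add y))
        rw [← lintegral_indicator_one hS, ← lintegral_const_mul' _ _ (by simp)]
        refine lintegral_congr fun t => ?_
        by_cases ht : t ∈ A <;> by_cases hyt : y + t ∈ E <;> simp [ht, hyt, mul_comm]
    _ ≤ (∫⁻ t, ‖f t‖ₑ ^ 2 ∂μ) * ∫⁻ y, ‖g y‖ₑ ^ 2 * M ∂μ := by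
        gcongr with y
        exact hM y
    _ = M * ((∫⁻ t, ‖f t‖ₑ ^ 2 ∂μ) * ∫⁻ t, ‖g t‖ₑ ^ 2 ∂μ) := by
        rw [lintegral_mul_const'' _ (hg.enorm.pow_const 2)]
        ring

end Convolution

def graphThickening (φ : ℝ → ℝ) (U J : Set ℝ) : Set (ℝ × ℝ) :=
  {q | q.1 ∈ U ∧ q.2 - φ q.1 ∈ J}

section GraphThickening

variable {φ ψ : ℝ → ℝ} {U U' J J' : Set ℝ}

theorem measurableSet_graphThickening (hφ : Measurable φ) (hU : MeasurableSet U)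
    (hJ : MeasurableSet J) : MeasurableSet (graphThickening φ U J) :=
  (measurable_fst hU).inter ((measurable_snd.sub (hφ.comp measurable_fst)) hJ)

theorem volume_graphThickening_inter_le (hφ : Measurable φ) (hψ : Measurable ψ)
    (hU : MeasurableSet U) (hU' : MeasurableSet U') (hJ : MeasurableSet J)
    (hJ' : MeasurableSet J') :
    volume (graphThickening φ U J ∩ graphThickening ψ U' J') ≤
      min (volume U) (volume U') * min (volume J) (volume J') := by
  have fiber (ξ : ℝ) :
      volume (Prod.mk ξ ⁻¹' (graphThickening φ U J ∩ graphThickening ψ U' J')) ≤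
        (U ∩ U').indicator (fun _ => min (volume J) (volume J')) ξ := by
    by_cases hξ : ξ ∈ U ∩ U'
    · rw [indicator_of_mem hξ]
      refine le_min ((measure_mono fun τ hτ => hτ.1.2).trans_eq ?_)
        ((measure_mono fun τ hτ => hτ.2.2).trans_eq ?_)
      · exact (measurePreserving_sub_right volume (φ ξ)).measure_preimage hJ.nullMeasurableSet
      · exact (measurePreserving_sub_right volume (ψ ξ)).measure_preimage hJ'.nullMeasurableSet
    · rw [indicator_of_notMem hξ]
      exact (measure_mono fun τ hτ => hξ ⟨hτ.1.1, hτ.2.1⟩).trans_eq measure_empty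
  rw [Measure.volume_eq_prod, Measure.prod_apply ((measurableSet_graphThickening hφ hU hJ).inter
    (measurableSet_graphThickening hψ hU' hJ'))]
  calc ∫⁻ ξ, volume (Prod.mk ξ ⁻¹' (graphThickening φ U J ∩ graphThickening ψ U' J'))
      ≤ ∫⁻ ξ, (U ∩ U').indicator (fun _ => min (volume J) (volume J')) ξ := lintegral_mono fiber
    _ = volume (U ∩ U') * min (volume J) (volume J') := by
        rw [lintegral_indicator_const (hU.inter hU'), mul_comm]
    _ ≤ min (volume U) (volume U') * min (volume J) (volume J') := by
        gcongr
        exact le_min (measure_mono inter_subset_left) (measure_mono inter_subset_right)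

theorem preimage_sub_graphThickening (x : ℝ × ℝ) :
    {t | x - t ∈ graphThickening φ U J} =
      graphThickening (fun ξ => x.2 - φ (x.1 - ξ)) {ξ | x.1 - ξ ∈ U} (-J) := by
  ext t
  simp only [graphThickening, mem_ofPred_eq, Prod.fst_sub, Prod.snd_sub, Set.mem_neg]
  ring_nf

theorem preimage_add_graphThickening (x : ℝ × ℝ) :
    {t | x + t ∈ graphThickening φ U J} =
      graphThickening (fun ξ => φ (x.1 + ξ) - x.2) {ξ | x.1 + ξ ∈ U} J := by
  ext t
  simp only [graphThickening, mem_ofPred_eq, Prod.fst_add, Prod.snd_add]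
  ring_nf

theorem volume_graphThickening_inter_preimage_sub_le (hφ : Measurable φ) (hψ : Measurable ψ)
    (hU : MeasurableSet U) (hU' : MeasurableSet U') (hJ : MeasurableSet J)
    (hJ' : MeasurableSet J') (x : ℝ × ℝ) :
    volume (graphThickening φ U J ∩ {t | x - t ∈ graphThickening ψ U' J'}) ≤
      min (volume U) (volume U') * min (volume J) (volume J') := by
  rw [preimage_sub_graphThickening]
  refine (volume_graphThickening_inter_le hφ (by fun_prop) hU
    (hU'.preimage (measurable_const_sub x.1)) hJ hJ'.neg).trans_eq ?_
  rw [(Measure.measurePreserving_sub_left volume x.1).measure_preimage hU'.nullMeasurableSet,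
    Measure.measure_neg]

theorem volume_graphThickening_inter_preimage_add_le (hφ : Measurable φ) (hψ : Measurable ψ)
    (hU : MeasurableSet U) (hU' : MeasurableSet U') (hJ : MeasurableSet J)
    (hJ' : MeasurableSet J') (x : ℝ × ℝ) :
    volume (graphThickening φ U J ∩ {t | x + t ∈ graphThickening ψ U' J'}) ≤
      min (volume U) (volume U') * min (volume J) (volume J') := by
  rw [preimage_add_graphThickening]
  refine (volume_graphThickening_inter_le hφ (by fun_prop) hU
    (hU'.preimage (measurable_const_add x.1)) hJ hJ').trans_eq ?_
  rw [measure_preimage_add]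

end GraphThickening

theorem measurable_omega (α : ℝ) : Measurable (omega α) := by
  unfold omega
  fun_prop

theorem exists_Uset_eq_setOf_abs_mem_Icc (k : ℤ) : ∃ a b : ℝ, Uset k = {ν | |ν| ∈ Icc a b} := by
  unfold Uset
  split_ifs <;> exact ⟨_, _, rfl⟩

theorem measurableSet_Uset (k : ℤ) : MeasurableSet (Uset k) := by
  obtain ⟨a, b, h⟩ := exists_Uset_eq_setOf_abs_mem_Icc k
  exact h ▸ measurable_abs measurableSet_Icc

theorem volume_Uset_ne_top (k : ℤ) : volume (Uset k) ≠ ⊤ := by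
  obtain ⟨a, b, h⟩ := exists_Uset_eq_setOf_abs_mem_Icc k
  rw [h]
  exact ((measure_mono fun ν hν => abs_le.mp hν.2).trans_lt measure_Icc_lt_top).ne

theorem measurableSet_Jset (j : ℕ) : MeasurableSet (Jset j) := by
  cases j with
  | zero => exact measurableSet_Icc
  | succ j => exact measurable_abs measurableSet_Icc

theorem volume_Jset_le (j : ℕ) : volume (Jset j) ≤ 2 ^ (j + 2) := by
  have hsub : Jset j ⊆ Icc (-2 ^ (j + 1)) (2 ^ (j + 1)) := by
    cases j with
    | zero => simp [Jset]
    | succ j => exact fun ν hν => abs_le.mp hν.2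
  calc volume (Jset j) ≤ volume (Icc (-(2 : ℝ) ^ (j + 1)) (2 ^ (j + 1))) := measure_mono hsub
    _ = 2 ^ (j + 2) := by
        rw [Real.volume_Icc, sub_neg_eq_add, ← two_mul, ← pow_succ', ENNReal.ofReal_pow zero_le_two]
        simp

theorem Vset_eq_graphThickening (α : ℝ) (k : ℤ) (j : ℕ) :
    Vset α k j = graphThickening (omega α) (Uset k) (Jset j) :=
  rfl

theorem eLpNorm_indicator_conv2_sq_le {α : ℝ} {k₁ k₂ k₃ : ℤ} {j₁ j₂ j₃ : ℕ}
    {f₁ f₂ : ℝ × ℝ → ℂ} (hf₁ : AEStronglyMeasurable f₁ volume)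
    (hf₂ : AEStronglyMeasurable f₂ volume) (hs₁ : Function.support f₁ ⊆ Vset α k₁ j₁)
    (hs₂ : Function.support f₂ ⊆ Vset α k₂ j₂) :
    eLpNorm ((Vset α k₃ j₃).indicator (conv2 f₁ f₂)) 2 volume ^ 2 ≤
      min (min (volume (Uset k₁)) (volume (Uset k₂))) (volume (Uset k₃)) *
        min (min (volume (Jset j₁)) (volume (Jset j₂))) (volume (Jset j₃)) *
        (eLpNorm f₁ 2 volume ^ 2 * eLpNorm f₂ 2 volume ^ 2) := by
  simp only [Vset_eq_graphThickening] at hs₁ hs₂ ⊢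
  have hω := measurable_omega α
  have hU := measurableSet_Uset
  have hJ := measurableSet_Jset
  have hV (k : ℤ) (j : ℕ) := measurableSet_graphThickening hω (hU k) (hJ j)
  have hconv : conv2 f₁ f₂ = f₁ ⋆[ContinuousLinearMap.mul ℂ ℂ, volume] f₂ := rfl
  have hconv' : conv2 f₁ f₂ = f₂ ⋆[ContinuousLinearMap.mul ℂ ℂ, volume] f₁ := by
    rw [hconv, ← convolution_flip, ContinuousLinearMap.flip_mul]
  rw [eLpNorm_indicator_eq_eLpNorm_restrict (hV k₃ j₃), eLpNorm_two_sq, eLpNorm_two_sq,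
    eLpNorm_two_sq]
  apply le_min_mul_min_mul_of_pairs
  · rw [hconv]
    exact (setLIntegral_le_lintegral _ _).trans
      (lintegral_enorm_convolution_sq_le hf₁ hf₂ (hV _ _) (hV _ _) hs₁ hs₂
        (volume_graphThickening_inter_preimage_sub_le hω hω (hU _) (hU _) (hJ _) (hJ _)))
  · rw [hconv]
    exact setLIntegral_enorm_convolution_sq_le hf₁ hf₂ (hV _ _) (hV _ _) hs₁
      (volume_graphThickening_inter_preimage_add_le hω hω (hU _) (hU _) (hJ _) (hJ _))
  · rw [hconv', mul_comm (∫⁻ x, ‖f₁ x‖ₑ ^ 2)]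
    exact setLIntegral_enorm_convolution_sq_le hf₂ hf₁ (hV _ _) (hV _ _) hs₂
      (volume_graphThickening_inter_preimage_add_le hω hω (hU _) (hU _) (hJ _) (hJ _))

theorem statement11_general (α : ℝ) :
    ∃ C : ℝ, 0 < C ∧
      ∀ (k₁ k₂ k₃ : ℤ) (j₁ j₂ j₃ : ℕ) (f₁ f₂ : ℝ × ℝ → ℂ),
        MemLp f₁ 2 volume → MemLp f₂ 2 volume →
        Function.support f₁ ⊆ Vset α k₁ j₁ →
        Function.support f₂ ⊆ Vset α k₂ j₂ →
        (eLpNorm ((Vset α k₃ j₃).indicator (conv2 f₁ f₂)) 2 volume).toReal ≤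
          C * (min (min (volume (Uset k₁)).toReal (volume (Uset k₂)).toReal)
                (volume (Uset k₃)).toReal) ^ (1 / 2 : ℝ) *
            (2 : ℝ) ^ (((min (min j₁ j₂) j₃ : ℕ) : ℝ) / 2) *
            (L2N f₁ * L2N f₂) := by
  refine ⟨2, two_pos, fun k₁ k₂ k₃ j₁ j₂ j₃ f₁ f₂ hf₁ hf₂ hs₁ hs₂ => ?_⟩
  set m := min (min j₁ j₂) j₃
  have hJ : min (min (volume (Jset j₁)) (volume (Jset j₂))) (volume (Jset j₃)) ≤ 2 ^ (m + 2) := by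
    refine le_trans ?_ (volume_Jset_le m)
    obtain h | h | h : m = j₁ ∨ m = j₂ ∨ m = j₃ := by omega
    all_goals rw [h]; simp
  have hU₁₂ : min (volume (Uset k₁)) (volume (Uset k₂)) ≠ ⊤ :=
    ne_top_of_le_ne_top (volume_Uset_ne_top k₁) (min_le_left _ _)
  have hU : min (min (volume (Uset k₁)) (volume (Uset k₂))) (volume (Uset k₃)) ≠ ⊤ :=
    ne_top_of_le_ne_top (volume_Uset_ne_top k₃) (min_le_right _ _)
  have key : eLpNorm ((Vset α k₃ j₃).indicator (conv2 f₁ f₂)) 2 volume ^ 2 ≤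
      min (min (volume (Uset k₁)) (volume (Uset k₂))) (volume (Uset k₃)) * 2 ^ (m + 2) *
        (eLpNorm f₁ 2 volume ^ 2 * eLpNorm f₂ 2 volume ^ 2) :=
    (eLpNorm_indicator_conv2_sq_le hf₁.1 hf₂.1 hs₁ hs₂).trans (by gcongr)
  replace key := ENNReal.toReal_mono (ENNReal.mul_ne_top (ENNReal.mul_ne_top hU (by simp))
    (ENNReal.mul_ne_top (ENNReal.pow_ne_top hf₁.eLpNorm_ne_top)
      (ENNReal.pow_ne_top hf₂.eLpNorm_ne_top))) key
  simp only [ENNReal.toReal_mul, ENNReal.toReal_pow, ENNReal.toReal_ofNat, ← mul_pow] at key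
  rw [ENNReal.toReal_min hU₁₂ (volume_Uset_ne_top k₃),
    ENNReal.toReal_min (volume_Uset_ne_top k₁) (volume_Uset_ne_top k₂)] at key
  exact le_two_mul_rpow_half (by positivity) (by unfold L2N; positivity) key

/-- Bilinear convolution estimate with the measure of the smallest frequency block. -/
theorem statement11 (α : ℝ) (hα : α ∈ Set.Ioo (1 : ℝ) 2) :
    ∃ C : ℝ, 0 < C ∧
      ∀ (k₁ k₂ k₃ : ℤ) (j₁ j₂ j₃ : ℕ) (f₁ f₂ : ℝ × ℝ → ℂ),
        MemLp f₁ 2 volume → MemLp f₂ 2 volume →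
        Function.support f₁ ⊆ Vset α k₁ j₁ →
        Function.support f₂ ⊆ Vset α k₂ j₂ →
        (eLpNorm ((Vset α k₃ j₃).indicator (conv2 f₁ f₂)) 2 volume).toReal ≤
          C * (min (min (volume (Uset k₁)).toReal (volume (Uset k₂)).toReal)
                (volume (Uset k₃)).toReal) ^ (1 / 2 : ℝ) *
            (2 : ℝ) ^ (((min (min j₁ j₂) j₃ : ℕ) : ℝ) / 2) *
            (L2N f₁ * L2N f₂) :=
  statement11_general α
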